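/- Let v be a C^m function (m > 2) on B_r in R^d with bounded derivatives, satisfying: (i) the partial derivatives of v in directions 2,...,d vanish at 0, and (ii) there exist a, b > 0 with a |w(x)| <= |v(x)| <= b |w(x)| on B_r, where w(x) = -i x_1 + ||x'||^2. Set v_k(x) = v(D_k x) with D_k(x_1,...,x_d) = (x_1/4^k, x_2/2^k,...,x_d/2^k). Then there exist constants c, c', c'' > 0 such that for all large k, on tilde{Gamma}_0 = {x : 1/8 <= |w(x)| <= 2}: (a) all partial derivatives of v_k of order <= floor(m) are bounded by c * 4^{-k}; (b) all partial derivatives of order <= floor(m) - 1 are Lipschitz with constant at most c' * 4^{-k}; (c) all partial derivatives of order floor(m) have tau-Hölder seminorm at most c'' * 4^{-k}, where tau = m - floor(m). -/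

import Mathlib

noncomputable def w {n : ℕ} (x : ℝ × EuclideanSpace ℝ (Fin n)) : ℂ :=
  -Complex.I * (x.1 : ℂ) + (‖x.2‖ : ℂ) ^ 2

/-- The anisotropic dyadic scaling `D_k(x₁, x') = (x₁/4^k, x'/2^k)`. -/
noncomputable def Dk {n : ℕ} (k : ℕ) (x : ℝ × EuclideanSpace ℝ (Fin n)) :
    ℝ × EuclideanSpace ℝ (Fin n) :=
  (x.1 / (4 : ℝ) ^ k, ((2 : ℝ) ^ k)⁻¹ • x.2)

/-- `Γ̃₀ = {x : 1/8 ≤ |w x| ≤ 2}`. -/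
def GammaTilde0 {n : ℕ} : Set (ℝ × EuclideanSpace ℝ (Fin n)) :=
  {x | (1 / 8 : ℝ) ≤ ‖w x‖ ∧ ‖w x‖ ≤ 2}

/-!
Write `vₖ = v ∘ Dₖ`. Since `|w ∘ Dₖ| = 4⁻ᵏ |w|`, hypothesis (ii) gives `|vₖ| ≤ 2b·4⁻ᵏ` on `Γ̃₀`.
An `i`-th derivative of `vₖ` is the `i`-th derivative of `v` composed with `Dₖ`, and
`‖Dₖ‖ ≤ 2⁻ᵏ`, so for `i ≥ 2` it is `O(4⁻ᵏ)`, and the top-order Hölder seminorm picks up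
`‖Dₖ‖ᵐ ≤ 4⁻ᵏ`. For `i = 1`, the first coordinate is scaled by `4⁻ᵏ`, while the derivative of `v`
in the directions `x'` vanishes at `0`, hence is `O(‖Dₖ x‖) = O(2⁻ᵏ)` at `Dₖ x`, and is then
scaled by another `2⁻ᵏ`. The Lipschitz bounds follow from the mean value theorem on the convex
set `Dₖ⁻¹(B_r) ∩ closedBall 0 2`, which contains `Γ̃₀`.
-/

open Set Metric

section CompContinuousLinearMap

variable {𝕜 E F G : Type*} [NontriviallyNormedField 𝕜] [NormedAddCommGroup E] [NormedSpace 𝕜 E]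
  [NormedAddCommGroup F] [NormedSpace 𝕜 F] [NormedAddCommGroup G] [NormedSpace 𝕜 G]
  {f : E → F} {s : Set E} {n : WithTop ℕ∞} {i : ℕ} {x y : G}

theorem ContinuousLinearMap.norm_iteratedFDerivWithin_comp_right_le (A : G →L[𝕜] E)
    (hf : ContDiffOn 𝕜 n f s) (hs : UniqueDiffOn 𝕜 s) (hs' : UniqueDiffOn 𝕜 (A ⁻¹' s))
    (hx : A x ∈ s) (hi : i ≤ n) :
    ‖iteratedFDerivWithin 𝕜 i (f ∘ A) (A ⁻¹' s) x‖ ≤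
      ‖iteratedFDerivWithin 𝕜 i f s (A x)‖ * ‖A‖ ^ i := by
  rw [A.iteratedFDerivWithin_comp_right hf hs hs' hx hi]
  simpa using ContinuousMultilinearMap.norm_compContinuousLinearMap_le _ fun _ : Fin i => A

theorem ContinuousLinearMap.norm_iteratedFDerivWithin_comp_right_sub_le (A : G →L[𝕜] E)
    (hf : ContDiffOn 𝕜 n f s) (hs : UniqueDiffOn 𝕜 s) (hs' : UniqueDiffOn 𝕜 (A ⁻¹' s))
    (hx : A x ∈ s) (hy : A y ∈ s) (hi : i ≤ n) :
    ‖iteratedFDerivWithin 𝕜 i (f ∘ A) (A ⁻¹' s) x - iteratedFDerivWithin 𝕜 i (f ∘ A) (A ⁻¹' s) y‖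
      ≤ ‖iteratedFDerivWithin 𝕜 i f s (A x) - iteratedFDerivWithin 𝕜 i f s (A y)‖ * ‖A‖ ^ i := by
  rw [A.iteratedFDerivWithin_comp_right hf hs hs' hx hi,
    A.iteratedFDerivWithin_comp_right hf hs hs' hy hi,
    ← ContinuousMultilinearMap.compContinuousLinearMapL_apply,
    ← ContinuousMultilinearMap.compContinuousLinearMapL_apply, ← map_sub,
    ContinuousMultilinearMap.compContinuousLinearMapL_apply]
  simpa using ContinuousMultilinearMap.norm_compContinuousLinearMap_le _ fun _ : Fin i => A

theorem ContinuousLinearMap.norm_iteratedFDerivWithin_comp_right_sub_le_of_holder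
    {t H τ : ℝ} (A : G →L[𝕜] E) (hf : ContDiffOn 𝕜 n f s) (hs : UniqueDiffOn 𝕜 s)
    (hs' : UniqueDiffOn 𝕜 (A ⁻¹' s)) (hi : i ≤ n) (ht : 0 < t) (hA : ‖A‖ ≤ t) (hτ : 0 ≤ τ)
    (hH0 : 0 ≤ H) (hH : ∀ x ∈ s, ∀ y ∈ s,
      ‖iteratedFDerivWithin 𝕜 i f s x - iteratedFDerivWithin 𝕜 i f s y‖ ≤ H * ‖x - y‖ ^ τ)
    (hx : A x ∈ s) (hy : A y ∈ s) :
    ‖iteratedFDerivWithin 𝕜 i (f ∘ A) (A ⁻¹' s) x - iteratedFDerivWithin 𝕜 i (f ∘ A) (A ⁻¹' s) y‖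
      ≤ H * t ^ ((i : ℝ) + τ) * ‖x - y‖ ^ τ := by
  have hAxy : ‖A x - A y‖ ≤ t * ‖x - y‖ := by
    rw [← map_sub]
    exact A.le_of_opNorm_le hA _
  calc _ ≤ ‖iteratedFDerivWithin 𝕜 i f s (A x) - iteratedFDerivWithin 𝕜 i f s (A y)‖ * ‖A‖ ^ i :=
        A.norm_iteratedFDerivWithin_comp_right_sub_le hf hs hs' hx hy hi
    _ ≤ H * (t * ‖x - y‖) ^ τ * t ^ i := by
        gcongr
        exact (hH _ hx _ hy).trans (by gcongr)
    _ = H * t ^ ((i : ℝ) + τ) * ‖x - y‖ ^ τ := by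
        rw [Real.mul_rpow ht.le (norm_nonneg _), Real.rpow_add ht, Real.rpow_natCast]
        ring

end CompContinuousLinearMap

section MeanValue

variable {E F : Type*} [NormedAddCommGroup E] [NormedSpace ℝ E] [NormedAddCommGroup F]
  [NormedSpace ℝ F] {f : E → F} {n : WithTop ℕ∞} {x y : E}

theorem norm_iteratedFDerivWithin_sub_le_of_norm_succ_le {t S : Set E} {i : ℕ} {C : ℝ}
    (hf : ContDiffOn ℝ n f t) (ht : UniqueDiffOn ℝ t) (hi : i < n) (hSt : S ⊆ t)
    (hS : Convex ℝ S) (hC : ∀ z ∈ S, ‖iteratedFDerivWithin ℝ (i + 1) f t z‖ ≤ C) (hx : x ∈ S)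
    (hy : y ∈ S) :
    ‖iteratedFDerivWithin ℝ i f t x - iteratedFDerivWithin ℝ i f t y‖ ≤ C * ‖x - y‖ := by
  have hdiff := hf.differentiableOn_iteratedFDerivWithin hi ht
  refine hS.norm_image_sub_le_of_norm_hasFDerivWithin_le
    (fun z hz => ((hdiff z (hSt hz)).hasFDerivWithinAt).mono hSt) (fun z hz => ?_) hy hx
  rw [norm_fderivWithin_iteratedFDerivWithin]
  exact hC z hz

theorem norm_fderivWithin_sub_le_of_norm_iteratedFDerivWithin_two_le {s : Set E} {M : ℝ}
    (hf : ContDiffOn ℝ n f s) (hs : UniqueDiffOn ℝ s) (hsc : Convex ℝ s) (hn : 2 ≤ n)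
    (hM : ∀ z ∈ s, ‖iteratedFDerivWithin ℝ 2 f s z‖ ≤ M) (hx : x ∈ s) (hy : y ∈ s) :
    ‖fderivWithin ℝ f s x - fderivWithin ℝ f s y‖ ≤ M * ‖x - y‖ := by
  rw [← dist_eq_norm, ← dist_iteratedFDerivWithin_one f f (hs x hx) (hs y hy), dist_eq_norm]
  exact norm_iteratedFDerivWithin_sub_le_of_norm_succ_le hf hs
    (lt_of_lt_of_le (by norm_num) hn) subset_rfl hsc hM hx hy

end MeanValue

theorem exists_forall_le_of_forall_le_of_finite {α : Type*} {N : ℕ} {g : ℕ → α → ℝ}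
    {s : Set α} (h : ∀ i ≤ N, ∃ M, ∀ x ∈ s, g i x ≤ M) :
    ∃ M, ∀ i ≤ N, ∀ x ∈ s, g i x ≤ M := by
  obtain ⟨M, hM⟩ : BddAbove (⋃ i ∈ Iic N, g i '' s) :=
    (finite_Iic N).bddAbove_biUnion.2 fun i hi =>
      let ⟨M, hM⟩ := h i hi
      ⟨M, forall_mem_image.2 hM⟩
  exact ⟨M, fun i hi x hx => hM (mem_biUnion (mem_Iic.2 hi) (mem_image_of_mem _ hx))⟩

theorem one_div_two_pow_sq (k : ℕ) : (1 / 2 ^ k : ℝ) ^ 2 = 1 / 4 ^ k := by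
  rw [div_pow, one_pow, ← pow_mul, mul_comm, pow_mul]
  norm_num

section Dilation

variable {n : ℕ}

theorem norm_Dk_le (k : ℕ) (x : ℝ × EuclideanSpace ℝ (Fin n)) : ‖Dk k x‖ ≤ ‖x‖ / 2 ^ k := by
  have h24 : (2 : ℝ) ^ k ≤ 4 ^ k := pow_le_pow_left₀ (by norm_num) (by norm_num) k
  refine max_le ?_ ?_
  · rw [Dk, norm_div, norm_pow, Real.norm_ofNat]
    exact div_le_div₀ (norm_nonneg _) (norm_fst_le x) (by positivity) h24
  · rw [Dk, norm_smul, norm_inv, norm_pow, Real.norm_ofNat, inv_mul_eq_div]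
    exact div_le_div_of_nonneg_right (norm_snd_le x) (by positivity)

theorem norm_w_Dk (k : ℕ) (x : ℝ × EuclideanSpace ℝ (Fin n)) :
    ‖w (Dk k x)‖ = ‖w x‖ / 4 ^ k := by
  have hw : w (Dk k x) = w x / 4 ^ k := by
    have h4 : ((2 : ℂ) ^ k) ^ 2 = 4 ^ k := by rw [← pow_mul, mul_comm, pow_mul]; norm_num
    simp only [w, Dk, norm_smul, norm_inv, norm_pow, Real.norm_ofNat]
    push_cast
    rw [← h4]
    field_simp
  rw [hw, norm_div, norm_pow, Complex.norm_ofNat]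

theorem norm_w_Dk_le_of_mem_GammaTilde0 {x : ℝ × EuclideanSpace ℝ (Fin n)}
    (hx : x ∈ GammaTilde0) (k : ℕ) : ‖w (Dk k x)‖ ≤ 2 / 4 ^ k := by
  rw [norm_w_Dk]
  gcongr
  exact hx.2

theorem norm_le_two_of_mem_GammaTilde0 {x : ℝ × EuclideanSpace ℝ (Fin n)}
    (hx : x ∈ GammaTilde0) : ‖x‖ ≤ 2 := by
  have hre : (w x).re = ‖x.2‖ ^ 2 := by simp [w, ← Complex.ofReal_pow]
  have him : (w x).im = -x.1 := by simp [w, ← Complex.ofReal_pow]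
  have h1 : |x.1| ≤ 2 := by
    simpa [him] using (Complex.abs_im_le_norm (w x)).trans hx.2
  have h2 : ‖x.2‖ ^ 2 ≤ 2 := by
    simpa [hre] using (Complex.abs_re_le_norm (w x)).trans hx.2
  rw [Prod.norm_def, Real.norm_eq_abs]
  exact max_le h1 (by nlinarith [norm_nonneg x.2])

variable (n) in
noncomputable def DkCLM (k : ℕ) :
    (ℝ × EuclideanSpace ℝ (Fin n)) →L[ℝ] ℝ × EuclideanSpace ℝ (Fin n) :=
  LinearMap.toContinuousLinearMap
    { toFun := Dk k
      map_add' := fun x y => by simp [Dk, add_div]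
      map_smul' := fun c x => by simp [Dk, smul_comm _ c, mul_div_assoc] }

@[simp]
theorem coe_DkCLM (k : ℕ) : ⇑(DkCLM n k) = Dk k := rfl

theorem norm_DkCLM_le (k : ℕ) : ‖DkCLM n k‖ ≤ 1 / 2 ^ k :=
  (DkCLM n k).opNorm_le_bound (by positivity) fun x => by
    simpa [div_eq_inv_mul] using norm_Dk_le k x

theorem norm_comp_DkCLM_le {F : Type*} [NormedAddCommGroup F] [NormedSpace ℝ F]
    (G : (ℝ × EuclideanSpace ℝ (Fin n)) →L[ℝ] F) {δ : ℝ} (hδ : 0 ≤ δ)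
    (hG : ∀ y, ‖G (0, y)‖ ≤ δ * ‖y‖) (k : ℕ) :
    ‖G.comp (DkCLM n k)‖ ≤ ‖G‖ / 4 ^ k + δ / 2 ^ k := by
  refine G.comp (DkCLM n k) |>.opNorm_le_bound (by positivity) fun z => ?_
  have hsplit : G (Dk k z) = (1 / 4 ^ k : ℝ) • G (z.1, 0) + (1 / 2 ^ k : ℝ) • G (0, z.2) := by
    rw [← map_smul, ← map_smul, ← map_add]
    congr 1
    ext <;> simp [Dk, div_eq_inv_mul]
  have h1 : ‖G (z.1, 0)‖ ≤ ‖G‖ * ‖z‖ :=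
    (G.le_opNorm _).trans (mul_le_mul_of_nonneg_left (by simpa using norm_fst_le z) (norm_nonneg G))
  have h2 : ‖G (0, z.2)‖ ≤ δ * ‖z‖ :=
    (hG z.2).trans (mul_le_mul_of_nonneg_left (norm_snd_le z) hδ)
  rw [ContinuousLinearMap.comp_apply, coe_DkCLM, hsplit]
  refine (norm_add_le _ _).trans ?_
  rw [norm_smul, norm_smul, Real.norm_of_nonneg (by positivity),
    Real.norm_of_nonneg (by positivity)]
  calc 1 / 4 ^ k * ‖G (z.1, 0)‖ + 1 / 2 ^ k * ‖G (0, z.2)‖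
      ≤ 1 / 4 ^ k * (‖G‖ * ‖z‖) + 1 / 2 ^ k * (δ * ‖z‖) := by gcongr
    _ = (‖G‖ / 4 ^ k + δ / 2 ^ k) * ‖z‖ := by ring

end Dilation

section Rescaled

variable {n N : ℕ} {F : Type*} [NormedAddCommGroup F] [NormedSpace ℝ F]
  {v : ℝ × EuclideanSpace ℝ (Fin n) → F} {s : Set (ℝ × EuclideanSpace ℝ (Fin n))} {M : ℝ}
  {k : ℕ} {x y : ℝ × EuclideanSpace ℝ (Fin n)}

theorem norm_iteratedFDerivWithin_comp_Dk_le {i : ℕ} (hv : ContDiffOn ℝ N v s) (hs : IsOpen s)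
    (hM : ∀ z ∈ s, ‖iteratedFDerivWithin ℝ i v s z‖ ≤ M) (hi : 2 ≤ i) (hiN : i ≤ N)
    (hx : Dk k x ∈ s) :
    ‖iteratedFDerivWithin ℝ i (fun z => v (Dk k z)) (Dk k ⁻¹' s) x‖ ≤ M / 4 ^ k := by
  set A := DkCLM n k
  have hA : ‖A‖ ^ i ≤ (1 / 2 ^ k) ^ 2 :=
    (pow_le_pow_left₀ (norm_nonneg A) (norm_DkCLM_le k) i).trans
      (pow_le_pow_of_le_one (by positivity) (div_le_one_of_le₀ (one_le_pow₀ one_le_two)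
        (by positivity)) hi)
  calc ‖iteratedFDerivWithin ℝ i (v ∘ A) (A ⁻¹' s) x‖
      ≤ ‖iteratedFDerivWithin ℝ i v s (A x)‖ * ‖A‖ ^ i :=
        A.norm_iteratedFDerivWithin_comp_right_le hv hs.uniqueDiffOn
          (hs.preimage A.continuous).uniqueDiffOn hx (by exact_mod_cast hiN)
    _ ≤ M * (1 / 2 ^ k) ^ 2 :=
        mul_le_mul (hM _ hx) hA (by positivity) ((norm_nonneg _).trans (hM _ hx))
    _ = M / 4 ^ k := by rw [one_div_two_pow_sq, mul_one_div]

theorem norm_iteratedFDerivWithin_one_comp_Dk_le (hv : ContDiffOn ℝ N v s) (hs : IsOpen s)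
    (hsc : Convex ℝ s) (h0 : 0 ∈ s) (hN : 2 ≤ N)
    (hM : ∀ i ≤ N, ∀ z ∈ s, ‖iteratedFDerivWithin ℝ i v s z‖ ≤ M)
    (hv0 : ∀ y, fderivWithin ℝ v s 0 (0, y) = 0) (hx : Dk k x ∈ s) :
    ‖iteratedFDerivWithin ℝ 1 (fun z => v (Dk k z)) (Dk k ⁻¹' s) x‖ ≤ M * (1 + ‖x‖) / 4 ^ k := by
  set A := DkCLM n k
  set G := fderivWithin ℝ v s (A x)
  have hM0 : 0 ≤ M := (norm_nonneg _).trans (hM 0 (Nat.zero_le N) 0 h0)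
  have hU : UniqueDiffWithinAt ℝ (A ⁻¹' s) x :=
    (hs.preimage A.continuous).uniqueDiffOn x hx
  have hchain : fderivWithin ℝ (v ∘ A) (A ⁻¹' s) x = G.comp A := by
    have hvx : DifferentiableWithinAt ℝ v s (A x) :=
      (hv.differentiableOn (by exact_mod_cast (by omega : N ≠ 0))) _ hx
    rw [fderivWithin_comp x hvx A.differentiableWithinAt (mapsTo_preimage A s) hU,
      A.fderivWithin hU]
  have hG : ‖G‖ ≤ M :=
    (norm_iteratedFDerivWithin_one v (hs.uniqueDiffOn _ hx)).symm.trans_le (hM 1 (by omega) _ hx)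
  have hG0 : ∀ y, ‖G (0, y)‖ ≤ M * (‖x‖ / 2 ^ k) * ‖y‖ := fun y => by
    have hGL : ‖G - fderivWithin ℝ v s 0‖ ≤ M * (‖x‖ / 2 ^ k) := by
      refine (norm_fderivWithin_sub_le_of_norm_iteratedFDerivWithin_two_le hv hs.uniqueDiffOn hsc
        (by exact_mod_cast hN) (hM 2 hN) hx h0).trans ?_
      rw [sub_zero]
      exact mul_le_mul_of_nonneg_left (norm_Dk_le k x) hM0
    calc ‖G (0, y)‖ = ‖(G - fderivWithin ℝ v s 0) (0, y)‖ := by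
          rw [sub_apply, hv0, sub_zero]
      _ ≤ ‖G - fderivWithin ℝ v s 0‖ * ‖((0 : ℝ), y)‖ := ContinuousLinearMap.le_opNorm _ _
      _ ≤ M * (‖x‖ / 2 ^ k) * ‖y‖ := by
          rw [Prod.norm_mk, norm_zero, max_eq_right (norm_nonneg y)]
          gcongr
  change ‖iteratedFDerivWithin ℝ 1 (v ∘ A) (A ⁻¹' s) x‖ ≤ _
  rw [norm_iteratedFDerivWithin_one _ hU, hchain]
  calc ‖G.comp A‖ ≤ ‖G‖ / 4 ^ k + M * (‖x‖ / 2 ^ k) / 2 ^ k :=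
        norm_comp_DkCLM_le G (by positivity) hG0 k
    _ ≤ M / 4 ^ k + M * (‖x‖ / 2 ^ k) / 2 ^ k := by gcongr
    _ = M * (1 + ‖x‖) / 4 ^ k := by
        rw [show (4 : ℝ) ^ k = 2 ^ k * 2 ^ k by rw [← mul_pow]; norm_num]
        field_simp

theorem norm_iteratedFDerivWithin_comp_Dk_le_of_norm_le_two (hv : ContDiffOn ℝ N v s)
    (hs : IsOpen s) (hsc : Convex ℝ s) (h0 : 0 ∈ s) (hN : 2 ≤ N)
    (hM : ∀ i ≤ N, ∀ z ∈ s, ‖iteratedFDerivWithin ℝ i v s z‖ ≤ M)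
    (hv0 : ∀ y, fderivWithin ℝ v s 0 (0, y) = 0) {i : ℕ} (hi : 1 ≤ i) (hiN : i ≤ N)
    (hx : Dk k x ∈ s) (hx2 : ‖x‖ ≤ 2) :
    ‖iteratedFDerivWithin ℝ i (fun z => v (Dk k z)) (Dk k ⁻¹' s) x‖ ≤ 3 * M / 4 ^ k := by
  have hM0 : 0 ≤ M := (norm_nonneg _).trans (hM 0 (Nat.zero_le N) 0 h0)
  rcases hi.eq_or_lt with rfl | hi
  · refine (norm_iteratedFDerivWithin_one_comp_Dk_le hv hs hsc h0 hN hM hv0 hx).trans ?_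
    rw [mul_comm 3 M]
    gcongr
    linarith
  · refine (norm_iteratedFDerivWithin_comp_Dk_le hv hs (hM i hiN) hi hiN hx).trans ?_
    gcongr
    linarith

theorem norm_iteratedFDerivWithin_comp_Dk_sub_le (hv : ContDiffOn ℝ N v s) (hs : IsOpen s)
    (hsc : Convex ℝ s) (h0 : 0 ∈ s) (hN : 2 ≤ N)
    (hM : ∀ i ≤ N, ∀ z ∈ s, ‖iteratedFDerivWithin ℝ i v s z‖ ≤ M)
    (hv0 : ∀ y, fderivWithin ℝ v s 0 (0, y) = 0) {i : ℕ} (hi : i < N)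
    (hx : Dk k x ∈ s) (hx2 : ‖x‖ ≤ 2) (hy : Dk k y ∈ s) (hy2 : ‖y‖ ≤ 2) :
    ‖iteratedFDerivWithin ℝ i (fun z => v (Dk k z)) (Dk k ⁻¹' s) x
      - iteratedFDerivWithin ℝ i (fun z => v (Dk k z)) (Dk k ⁻¹' s) y‖
      ≤ 3 * M / 4 ^ k * ‖x - y‖ :=
  norm_iteratedFDerivWithin_sub_le_of_norm_succ_le (hv.comp_continuousLinearMap (DkCLM n k))
    (hs.preimage (DkCLM n k).continuous).uniqueDiffOn (by exact_mod_cast hi) inter_subset_left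
    ((hsc.linear_preimage (DkCLM n k).toLinearMap).inter (convex_closedBall 0 2))
    (fun _ hz => norm_iteratedFDerivWithin_comp_Dk_le_of_norm_le_two hv hs hsc h0 hN hM hv0
      (Nat.le_add_left 1 i) hi hz.1 (mem_closedBall_zero_iff.1 hz.2))
    ⟨hx, mem_closedBall_zero_iff.2 hx2⟩ ⟨hy, mem_closedBall_zero_iff.2 hy2⟩

theorem norm_iteratedFDerivWithin_comp_Dk_sub_le_of_holder {m H : ℝ} (hv : ContDiffOn ℝ N v s)
    (hs : IsOpen s) (hm : 2 ≤ m) (hNm : (N : ℝ) ≤ m) (hH0 : 0 ≤ H)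
    (hH : ∀ x ∈ s, ∀ y ∈ s,
      ‖iteratedFDerivWithin ℝ N v s x - iteratedFDerivWithin ℝ N v s y‖ ≤ H * ‖x - y‖ ^ (m - N))
    (hx : Dk k x ∈ s) (hy : Dk k y ∈ s) :
    ‖iteratedFDerivWithin ℝ N (fun z => v (Dk k z)) (Dk k ⁻¹' s) x
      - iteratedFDerivWithin ℝ N (fun z => v (Dk k z)) (Dk k ⁻¹' s) y‖
      ≤ H / 4 ^ k * ‖x - y‖ ^ (m - N) := by
  have hscale : (1 / 2 ^ k : ℝ) ^ m ≤ 1 / 4 ^ k := by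
    rw [← one_div_two_pow_sq, ← Real.rpow_two]
    exact Real.rpow_le_rpow_of_exponent_ge (by positivity)
      (div_le_one_of_le₀ (one_le_pow₀ one_le_two) (by positivity)) hm
  calc _ ≤ H * (1 / 2 ^ k) ^ ((N : ℝ) + (m - N)) * ‖x - y‖ ^ (m - N) :=
        (DkCLM n k).norm_iteratedFDerivWithin_comp_right_sub_le_of_holder hv hs.uniqueDiffOn
          (hs.preimage (DkCLM n k).continuous).uniqueDiffOn le_rfl (by positivity)
          (norm_DkCLM_le k) (sub_nonneg.2 hNm) hH0 hH hx hy
    _ ≤ H / 4 ^ k * ‖x - y‖ ^ (m - N) := by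
        rw [add_sub_cancel, ← mul_one_div H]
        gcongr

end Rescaled

theorem stmt17_general {n : ℕ} (r : ℝ) (hr : 0 < r) (m : ℝ) (hm : 2 < m)
    (v : ℝ × EuclideanSpace ℝ (Fin n) → ℂ) (a b : ℝ) (hb : 0 < b)
    (hreg : ContDiffOn ℝ (⌊m⌋₊ : ℕ) v (Metric.ball 0 r))
    (hbdd : ∀ i ≤ ⌊m⌋₊, ∃ M : ℝ,
      ∀ x ∈ Metric.ball (0 : ℝ × EuclideanSpace ℝ (Fin n)) r,
        ‖iteratedFDerivWithin ℝ i v (Metric.ball 0 r) x‖ ≤ M)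
    (hHol : ∃ H : ℝ, ∀ x ∈ Metric.ball (0 : ℝ × EuclideanSpace ℝ (Fin n)) r,
      ∀ y ∈ Metric.ball (0 : ℝ × EuclideanSpace ℝ (Fin n)) r,
        ‖iteratedFDerivWithin ℝ (⌊m⌋₊) v (Metric.ball 0 r) x
          - iteratedFDerivWithin ℝ (⌊m⌋₊) v (Metric.ball 0 r) y‖
          ≤ H * ‖x - y‖ ^ (m - ⌊m⌋₊))
    (hi : ∀ y : EuclideanSpace ℝ (Fin n),
      fderivWithin ℝ v (Metric.ball 0 r) 0 ((0 : ℝ), y) = 0)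
    (hii : ∀ x ∈ Metric.ball (0 : ℝ × EuclideanSpace ℝ (Fin n)) r,
      a * ‖w x‖ ≤ ‖v x‖ ∧
      ‖v x‖ ≤ b * ‖w x‖) :
    ∃ c > (0 : ℝ), ∃ c' > (0 : ℝ), ∃ c'' > (0 : ℝ), ∀ k : ℕ,
      (∀ x ∈ GammaTilde0 (n := n), Dk k x ∈ Metric.ball (0 : ℝ × EuclideanSpace ℝ (Fin n)) r) →
      (∀ i ≤ ⌊m⌋₊, ∀ x ∈ GammaTilde0 (n := n),
        ‖iteratedFDerivWithin ℝ i (fun z => v (Dk k z)) (Dk k ⁻¹' Metric.ball 0 r) x‖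
          ≤ c / 4 ^ k) ∧
      (∀ i ≤ ⌊m⌋₊ - 1, ∀ x ∈ GammaTilde0 (n := n), ∀ y ∈ GammaTilde0 (n := n),
        ‖iteratedFDerivWithin ℝ i (fun z => v (Dk k z)) (Dk k ⁻¹' Metric.ball 0 r) x
          - iteratedFDerivWithin ℝ i (fun z => v (Dk k z)) (Dk k ⁻¹' Metric.ball 0 r) y‖
          ≤ (c' / 4 ^ k) * ‖x - y‖) ∧
      (∀ x ∈ GammaTilde0 (n := n), ∀ y ∈ GammaTilde0 (n := n),
        ‖iteratedFDerivWithin ℝ (⌊m⌋₊) (fun z => v (Dk k z)) (Dk k ⁻¹' Metric.ball 0 r) x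
          - iteratedFDerivWithin ℝ (⌊m⌋₊) (fun z => v (Dk k z)) (Dk k ⁻¹' Metric.ball 0 r) y‖
          ≤ (c'' / 4 ^ k) * ‖x - y‖ ^ (m - ⌊m⌋₊)) := by
  have hN : 2 ≤ ⌊m⌋₊ := Nat.le_floor (by exact_mod_cast hm.le)
  obtain ⟨M, hM⟩ := exists_forall_le_of_forall_le_of_finite hbdd
  have hM0 : 0 ≤ M := (norm_nonneg _).trans (hM 0 (Nat.zero_le _) 0 (mem_ball_self hr))
  obtain ⟨H, hH⟩ := hHol
  set c := 2 * b + 3 * M + max H 0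
  have hbc : 2 * b ≤ c := by linarith [le_max_right H 0]
  have hMc : 3 * M ≤ c := by linarith [le_max_right H 0]
  have hHc : max H 0 ≤ c := by linarith
  have hc : 0 < c := by positivity
  refine ⟨c, hc, c, hc, c, hc, fun k hk => ⟨fun i hiN x hx => ?_, fun i hiN x hx y hy => ?_,
    fun x hx y hy => ?_⟩⟩
  · rcases i.eq_zero_or_pos with rfl | hi0
    · rw [norm_iteratedFDerivWithin_zero]
      calc ‖v (Dk k x)‖ ≤ b * ‖w (Dk k x)‖ := (hii _ (hk x hx)).2
        _ ≤ b * (2 / 4 ^ k) := by gcongr; exact norm_w_Dk_le_of_mem_GammaTilde0 hx k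
        _ ≤ c / 4 ^ k := by rw [mul_div_assoc', mul_comm]; gcongr
    · exact (norm_iteratedFDerivWithin_comp_Dk_le_of_norm_le_two hreg isOpen_ball
        (convex_ball 0 r) (mem_ball_self hr) hN hM hi hi0 hiN (hk x hx)
        (norm_le_two_of_mem_GammaTilde0 hx)).trans (by gcongr)
  · exact (norm_iteratedFDerivWithin_comp_Dk_sub_le hreg isOpen_ball (convex_ball 0 r)
      (mem_ball_self hr) hN hM hi (by omega) (hk x hx) (norm_le_two_of_mem_GammaTilde0 hx)
      (hk y hy) (norm_le_two_of_mem_GammaTilde0 hy)).trans (by gcongr)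
  · exact (norm_iteratedFDerivWithin_comp_Dk_sub_le_of_holder hreg isOpen_ball hm.le
      (Nat.floor_le (by linarith)) (le_max_right H 0)
      (fun x hx y hy => (hH x hx y hy).trans (by gcongr; exact le_max_left H 0))
      (hk x hx) (hk y hy)).trans (by gcongr)

/-- If `v ∈ C_b^m(B_r)` (`m > 2`) with (i) the partial derivatives of `v` at `0` in the
directions `2,…,d` vanishing, and (ii) `a|w| ≤ |v| ≤ b|w|` on `B_r`, then with
`v_k = v ∘ D_k` there are `c, c', c'' > 0` such that for all `k` with `D_k(Γ̃₀) ⊆ B_r`,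
on `Γ̃₀`: derivatives of `v_k` of order `≤ ⌊m⌋` are bounded by `c·4^{-k}`, those of order
`≤ ⌊m⌋ - 1` are Lipschitz with constant `c'·4^{-k}`, and those of order `⌊m⌋` are
`(m-⌊m⌋)`-Hölder with constant `c''·4^{-k}`. -/
theorem stmt17 {n : ℕ} (hn : 1 ≤ n) (r : ℝ) (hr : 0 < r) (m : ℝ) (hm : 2 < m)
    (v : ℝ × EuclideanSpace ℝ (Fin n) → ℂ) (a b : ℝ) (ha : 0 < a) (hb : 0 < b)
    (hreg : ContDiffOn ℝ (⌊m⌋₊ : ℕ) v (Metric.ball 0 r))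
    (hbdd : ∀ i ≤ ⌊m⌋₊, ∃ M : ℝ,
      ∀ x ∈ Metric.ball (0 : ℝ × EuclideanSpace ℝ (Fin n)) r,
        ‖iteratedFDerivWithin ℝ i v (Metric.ball 0 r) x‖ ≤ M)
    (hHol : ∃ H : ℝ, ∀ x ∈ Metric.ball (0 : ℝ × EuclideanSpace ℝ (Fin n)) r,
      ∀ y ∈ Metric.ball (0 : ℝ × EuclideanSpace ℝ (Fin n)) r,
        ‖iteratedFDerivWithin ℝ (⌊m⌋₊) v (Metric.ball 0 r) x
          - iteratedFDerivWithin ℝ (⌊m⌋₊) v (Metric.ball 0 r) y‖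
          ≤ H * ‖x - y‖ ^ (m - ⌊m⌋₊))
    (hi : ∀ y : EuclideanSpace ℝ (Fin n),
      fderivWithin ℝ v (Metric.ball 0 r) 0 ((0 : ℝ), y) = 0)
    (hii : ∀ x ∈ Metric.ball (0 : ℝ × EuclideanSpace ℝ (Fin n)) r,
      a * ‖w x‖ ≤ ‖v x‖ ∧
      ‖v x‖ ≤ b * ‖w x‖) :
    ∃ c > (0 : ℝ), ∃ c' > (0 : ℝ), ∃ c'' > (0 : ℝ), ∀ k : ℕ,
      (∀ x ∈ GammaTilde0 (n := n), Dk k x ∈ Metric.ball (0 : ℝ × EuclideanSpace ℝ (Fin n)) r) →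
      (∀ i ≤ ⌊m⌋₊, ∀ x ∈ GammaTilde0 (n := n),
        ‖iteratedFDerivWithin ℝ i (fun z => v (Dk k z)) (Dk k ⁻¹' Metric.ball 0 r) x‖
          ≤ c / 4 ^ k) ∧
      (∀ i ≤ ⌊m⌋₊ - 1, ∀ x ∈ GammaTilde0 (n := n), ∀ y ∈ GammaTilde0 (n := n),
        ‖iteratedFDerivWithin ℝ i (fun z => v (Dk k z)) (Dk k ⁻¹' Metric.ball 0 r) x
          - iteratedFDerivWithin ℝ i (fun z => v (Dk k z)) (Dk k ⁻¹' Metric.ball 0 r) y‖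
          ≤ (c' / 4 ^ k) * ‖x - y‖) ∧
      (∀ x ∈ GammaTilde0 (n := n), ∀ y ∈ GammaTilde0 (n := n),
        ‖iteratedFDerivWithin ℝ (⌊m⌋₊) (fun z => v (Dk k z)) (Dk k ⁻¹' Metric.ball 0 r) x
          - iteratedFDerivWithin ℝ (⌊m⌋₊) (fun z => v (Dk k z)) (Dk k ⁻¹' Metric.ball 0 r) y‖
          ≤ (c'' / 4 ^ k) * ‖x - y‖ ^ (m - ⌊m⌋₊)) :=
  stmt17_general r hr m hm v a b hb hreg hbdd hHol hi hii
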